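/- Let μ ≠ 0, ε = ±1 with εμ < 0, s = √(−εμ), and k₁, k₂, k₃, k₄ ∈ ℝ. Let X be the vector field on ℝ³ given by X₁ = (1/μ)(k₁e^{sx₁} + k₂e^{−sx₁} + k₃), X₂ = −(1/μ²)(k₁(μsx₂ − ε)e^{sx₁} − k₂(μsx₂ + ε)e^{−sx₁}) + k₄e^{−μx₃}, X₃ = (s/μ²)(k₁e^{sx₁} − k₂e^{−sx₁}) − μ/2, and let g be the metric with g₁₁ = (ε/μ)(e^{−2μx₃} − 1), g₁₂ = 1, g₁₃ = μx₂, g₃₃ = 1. Then there is no smooth function f: ℝ³ → ℝ such that X is the g-gradient of f, i.e. there is no smooth f with X^k g_{kj} = ∂_j f for all j everywhere on ℝ³. -/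

import Mathlib

/-- A point of `ℝ³`. -/
abbrev Pt := Fin 3 → ℝ

/-- The matrix of the metric `g` at a point `p = (x₁,x₂,x₃)`. -/
noncomputable def gMat (μ ε : ℝ) (p : Pt) : Matrix (Fin 3) (Fin 3) ℝ :=
  ![![(ε/μ) * (Real.exp (-(2*μ*p 2)) - 1), 1, μ * p 1],
    ![1, 0, 0],
    ![μ * p 1, 0, 1]]

/-- The soliton vector field in the case `εμ < 0`, with `s = √(−εμ)`. -/
noncomputable def solitonX (μ ε k₁ k₂ k₃ k₄ : ℝ) : Pt → Pt := fun p =>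
  let s := Real.sqrt (-(ε*μ))
  ![(1/μ) * (k₁ * Real.exp (s * p 0) + k₂ * Real.exp (-(s * p 0)) + k₃),
    -(1/μ^2) * (k₁ * (μ * s * p 1 - ε) * Real.exp (s * p 0)
      - k₂ * (μ * s * p 1 + ε) * Real.exp (-(s * p 0))) + k₄ * Real.exp (-(μ * p 2)),
    (s/μ^2) * (k₁ * Real.exp (s * p 0) - k₂ * Real.exp (-(s * p 0))) - μ/2]

/-- shorthand for `X₁` component as function of `x₁` -/
noncomputable def phiA (μ ε k₁ k₂ k₃ : ℝ) (a : ℝ) : ℝ :=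
  (1/μ) * (k₁ * Real.exp (Real.sqrt (-(ε*μ)) * a)
    + k₂ * Real.exp (-(Real.sqrt (-(ε*μ)) * a)) + k₃)

noncomputable def psiA (μ ε k₁ k₂ : ℝ) (a : ℝ) : ℝ :=
  (Real.sqrt (-(ε*μ))/μ^2) * (k₁ * Real.exp (Real.sqrt (-(ε*μ)) * a)
    - k₂ * Real.exp (-(Real.sqrt (-(ε*μ)) * a))) - μ/2

/-- The Ricci soliton vector field is not a gradient: there is no smooth `f : ℝ³ → ℝ`
with `Σ_k X^k g_{kj} = ∂_j f` at every point (i.e. `X = grad_g f`). -/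
theorem soliton_not_gradient (μ ε k₁ k₂ k₃ k₄ : ℝ) (hμ : μ ≠ 0)
    (hε : ε = 1 ∨ ε = -1) (hεμ : ε * μ < 0) :
    ¬ ∃ f : Pt → ℝ, ContDiff ℝ (⊤ : ℕ∞) f ∧
      ∀ (p : Pt) (j : Fin 3),
        (∑ k : Fin 3, solitonX μ ε k₁ k₂ k₃ k₄ p k * gMat μ ε p k j) =
          fderiv ℝ f p (Pi.single j 1) := by
  rintro ⟨f, hf, hX⟩
  have hdiff : Differentiable ℝ f := hf.differentiable (by simp)
  have hω1 : ∀ p : Pt, fderiv ℝ f p (Pi.single 1 1) = phiA μ ε k₁ k₂ k₃ (p 0) := by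
    intro p; rw [← hX p 1]
    simp [solitonX, gMat, phiA, Fin.sum_univ_three, Matrix.cons_val_zero, Matrix.cons_val_one,
      Matrix.head_cons, Matrix.cons_val_two, Matrix.tail_cons, Matrix.vecHead, Matrix.vecTail]
  have hω2 : ∀ p : Pt, fderiv ℝ f p (Pi.single 2 1) =
      μ * p 1 * phiA μ ε k₁ k₂ k₃ (p 0) + psiA μ ε k₁ k₂ (p 0) := by
    intro p; rw [← hX p 2]
    simp [solitonX, gMat, phiA, psiA, Fin.sum_univ_three, Matrix.cons_val_zero, Matrix.cons_val_one,
      Matrix.head_cons, Matrix.cons_val_two, Matrix.tail_cons, Matrix.vecHead, Matrix.vecTail]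
    ring
  have hω0 : ∀ p : Pt, fderiv ℝ f p (Pi.single 0 1) =
      phiA μ ε k₁ k₂ k₃ (p 0) * ((ε/μ) * (Real.exp (-(2*μ*p 2)) - 1))
      + (-(1/μ^2) * (k₁ * (μ * Real.sqrt (-(ε*μ)) * p 1 - ε) * Real.exp (Real.sqrt (-(ε*μ)) * p 0)
          - k₂ * (μ * Real.sqrt (-(ε*μ)) * p 1 + ε) * Real.exp (-(Real.sqrt (-(ε*μ)) * p 0)))
        + k₄ * Real.exp (-(μ * p 2)))
      + μ * p 1 * psiA μ ε k₁ k₂ (p 0) := by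
    intro p; rw [← hX p 0]
    simp [solitonX, gMat, phiA, psiA, Fin.sum_univ_three, Matrix.cons_val_zero, Matrix.cons_val_one,
      Matrix.head_cons, Matrix.cons_val_two, Matrix.tail_cons, Matrix.vecHead, Matrix.vecTail]
    ring
  -- f is affine along coordinate lines where the derivative is constant
  have key : ∀ (p : Pt) (j : Fin 3) (c t : ℝ),
      (∀ u : ℝ, fderiv ℝ f (p + u • (Pi.single j 1 : Pt)) (Pi.single j 1 : Pt) = c) →
      f (p + t • (Pi.single j 1 : Pt)) = f p + c * t := by
    intro p j c t hc
    have hline : ∀ u : ℝ, HasDerivAt (fun u : ℝ => f (p + u • (Pi.single j 1 : Pt))) c u := by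
      intro u
      have h1 : HasDerivAt (fun u : ℝ => p + u • (Pi.single j 1 : Pt))
          (Pi.single j 1 : Pt) u := by
        simpa using ((hasDerivAt_id u).smul_const (Pi.single j 1 : Pt)).const_add p
      have h2 := (hdiff (p + u • (Pi.single j 1 : Pt))).hasFDerivAt.comp_hasDerivAt u h1
      simpa [Function.comp_def, hc u] using h2
    have hz : ∀ u : ℝ, HasDerivAt (fun u : ℝ => f (p + u • (Pi.single j 1 : Pt)) - c * u) 0 u := by
      intro u
      simpa [Pi.sub_def] using (hline u).sub ((hasDerivAt_id u).const_mul c)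
    have h3 := is_const_of_deriv_eq_zero
      (f := fun u : ℝ => f (p + u • (Pi.single j 1 : Pt)) - c * u)
      (fun u => (hz u).differentiableAt) (fun u => (hz u).deriv) t 0
    simp at h3
    linarith
  -- Step A : affine in x₂
  have stepA : ∀ a b c : ℝ, f ![a, b, c] = f ![a, 0, c] + phiA μ ε k₁ k₂ k₃ a * b := by
    intro a b c
    have hpt : ∀ u : ℝ, (![a, 0, c] : Pt) + u • (Pi.single 1 1 : Pt) = ![a, u, c] := by
      intro u; funext k; fin_cases k <;> simp [Pi.single_apply]
    have h := key ![a, 0, c] 1 (phiA μ ε k₁ k₂ k₃ a) b (fun u => by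
      rw [hω1]; simp [hpt u])
    rw [hpt b] at h
    exact h
  -- Step B : affine in x₃
  have stepB : ∀ a b c : ℝ, f ![a, b, c] = f ![a, b, 0]
      + (μ * b * phiA μ ε k₁ k₂ k₃ a + psiA μ ε k₁ k₂ a) * c := by
    intro a b c
    have hpt : ∀ u : ℝ, (![a, b, 0] : Pt) + u • (Pi.single 2 1 : Pt) = ![a, b, u] := by
      intro u; funext k; fin_cases k <;> simp [Pi.single_apply]
    have h := key ![a, b, 0] 2 (μ * b * phiA μ ε k₁ k₂ k₃ a + psiA μ ε k₁ k₂ a) c (fun u => by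
      rw [hω2]; simp [hpt u])
    rw [hpt c] at h
    exact h
  -- φ vanishes identically
  have hφ0 : ∀ a : ℝ, phiA μ ε k₁ k₂ k₃ a = 0 := by
    intro a
    have h1 := stepA a 1 1
    have h2 := stepB a 1 1
    have h3 := stepB a 0 1
    have h4 := stepA a 1 0
    have hμφ : μ * phiA μ ε k₁ k₂ k₃ a = 0 := by linear_combination h1 - h2 + h3 - h4
    rcases mul_eq_zero.mp hμφ with h | h
    · exact absurd h hμ
    · exact h
  -- f is independent of x₂
  have hfb : ∀ a b c : ℝ, f ![a, b, c] = f ![a, 0, c] := by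
    intro a b c; rw [stepA a b c, hφ0 a]; ring
  -- equality of ∂₀-derivatives
  have hder : ∀ a b c : ℝ,
      fderiv ℝ f ![a, b, c] (Pi.single 0 1) = fderiv ℝ f ![a, 0, c] (Pi.single 0 1) := by
    intro a b c
    have hpt : ∀ (y : ℝ) (u : ℝ), (![(0:ℝ), y, c] : Pt) + u • (Pi.single 0 1 : Pt) = ![u, y, c] := by
      intro y u; funext k; fin_cases k <;> simp [Pi.single_apply]
    have hl : ∀ y : ℝ, HasDerivAt (fun u : ℝ => f ![u, y, c])
        (fderiv ℝ f ![a, y, c] (Pi.single 0 1)) a := by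
      intro y
      have h1 : HasDerivAt (fun u : ℝ => (![(0:ℝ), y, c] : Pt) + u • (Pi.single 0 1 : Pt))
          (Pi.single 0 1 : Pt) a := by
        simpa using ((hasDerivAt_id a).smul_const (Pi.single 0 1 : Pt)).const_add (![(0:ℝ), y, c] : Pt)
      have h2 := (hdiff (![(0:ℝ), y, c] + a • (Pi.single 0 1 : Pt))).hasFDerivAt.comp_hasDerivAt a h1
      simp only [Function.comp, hpt y] at h2
      exact h2
    have heqfun : (fun u : ℝ => f ![u, b, c]) = (fun u : ℝ => f ![u, 0, c]) := by
      funext u; exact hfb u b c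
    have hl1 := hl b
    rw [heqfun] at hl1
    exact hl1.unique (hl 0)
  -- contradiction
  have heq := hder 0 1 0
  rw [hω0 (![0, 1, 0] : Pt), hω0 (![0, 0, 0] : Pt)] at heq
  simp [phiA, psiA] at heq
  apply hμ
  have h8 : μ^8 = 0 := by field_simp at heq; linear_combination (-μ^4) * heq
  exact pow_eq_zero_iff (n := 8) (by norm_num) |>.mp h8
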